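/- If f : ∂P → ℝ is continuous, nonnegative, and H¹ on each side of P, and 0 ≤ k ≤ (∫_{∂P} f dμ)/|∂P|, then ∫_P |F(x,y)| dxdy ≤ (r/2)·∫_{∂P} f dμ. -/

import Mathlib

open MeasureTheory
open scoped RealInnerProductSpace

/-- The Euclidean plane. -/
abbrev E2 : Type := EuclideanSpace ℝ (Fin 2)

/-- Unit vector pointing from `A` to `B`. -/
noncomputable def uvec (A B : E2) : E2 := (dist A B)⁻¹ • (B - A)

/-- The restriction of `f : ∂P → ℝ` to the side from `A` to `B`, viewed as a function
on `[0, dist A B]` via the arclength parametrization. -/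
noncomputable def sideFun (A B : E2) (f : E2 → ℝ) (t : ℝ) : ℝ := f (A + t • uvec A B)

/-- The (signed) distance `d` from `A` to the foot of the altitude from `c` onto the
line through `A` and `B`. -/
noncomputable def footd (A B c : E2) : ℝ := ⟪c - A, uvec A B⟫

/-- The trianglewise extension `F` on the triangle `conv{A, B, c}`: in Euclidean
coordinates in which `A = (0,0)`, `B = (l,0)` and `c = (d,r)`, it is
`F(x,y) = (1 − y/r)·f((x − (d/r)y)/(1 − y/r)) + (k/r)·y` (and `= k` for `y = r`). -/
noncomputable def triExt (A B c : E2) (r k : ℝ) (f : E2 → ℝ) (p : E2) : ℝ :=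
  let u := uvec A B
  let dd := footd A B c
  let nv := r⁻¹ • (c - A - dd • u)
  let X := ⟪p - A, u⟫
  let Y := ⟪p - A, nv⟫
  if Y = r then k
  else (1 - Y / r) * f (A + ((X - (dd / r) * Y) / (1 - Y / r)) • u) + (k / r) * Y

/-!
Each triangle `conv {v i, v (i+1), c}` is swept by the segments joining the points
`v i + t • u` of its base (`u` the unit side vector, `0 ≤ t ≤ lᵢ`) to the incenter `c`:
`(t, s) ↦ (1 - s/r) • (v i + t • u) + (s/r) • c` maps `[0, lᵢ] × [0, r]` onto the triangle with
Jacobian `1 - s/r`, and along it `F = (1 - s/r) f(v i + t • u) + k s/r ≥ 0`. Integrating this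
polynomial in `s` gives `∫_{Δᵢ} |F| = (r/3) ∫ fᵢ + k r lᵢ / 6`, and summing over the sides,
`k |∂P| ≤ ∫_{∂P} f` bounds the total by `(r/3 + r/6) ∫_{∂P} f`.
-/

open Set

theorem convexHull_triple_eq_image {E : Type*} [AddCommGroup E] [Module ℝ E] (A u c : E) {l r : ℝ}
    (hl : 0 < l) (hr : 0 < r) :
    convexHull ℝ {A, A + l • u, c}
      = (fun w : ℝ × ℝ => (1 - w.2 / r) • (A + w.1 • u) + (w.2 / r) • c) ''
          (Icc 0 l ×ˢ Icc 0 r) := by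
  rw [pair_comm, insert_comm, convexHull_insert (insert_nonempty _ _), convexHull_pair,
    convexJoin_singleton_left]
  ext x
  simp only [mem_iUnion, segment_eq_image, mem_image, exists_prop]
  constructor
  · rintro ⟨_, ⟨θ, ⟨hθ0, hθ1⟩, rfl⟩, η, ⟨hη0, hη1⟩, rfl⟩
    refine ⟨(θ * l, r * (1 - η)), ⟨⟨by positivity, by nlinarith⟩, by nlinarith, by nlinarith⟩, ?_⟩
    simp only
    rw [mul_div_cancel_left₀ _ hr.ne']
    module
  · rintro ⟨⟨t, s⟩, ⟨⟨ht0, htl⟩, hs0, hsr⟩, rfl⟩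
    refine ⟨_, ⟨t / l, ⟨by positivity, (div_le_one hl).2 htl⟩, rfl⟩, 1 - s / r,
      ⟨sub_nonneg.2 ((div_le_one hr).2 hsr), by linarith [div_nonneg hs0 hr.le]⟩, ?_⟩
    match_scalars <;> field_simp <;> ring

theorem exists_measurePreserving_affine_frame {F : Type*} [NormedAddCommGroup F]
    [InnerProductSpace ℝ F] [MeasurableSpace F] [BorelSpace F] [FiniteDimensional ℝ F]
    (hF : Module.finrank ℝ F = 2) {u n : F} (hon : Orthonormal ℝ ![u, n]) (A : F) :
    ∃ e : ℝ × ℝ ≃ᵐ F, MeasurePreserving e volume volume ∧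
      ∀ w : ℝ × ℝ, e w = A + w.1 • u + w.2 • n := by
  let b : OrthonormalBasis (Fin 2) ℝ F :=
    (basisOfOrthonormalOfCardEqFinrank hon (by simp [hF])).toOrthonormalBasis (by simpa using hon)
  have hb : ⇑b = ![u, n] := by simp [b]
  refine ⟨((MeasurableEquiv.finTwoArrow.symm.trans (MeasurableEquiv.toLp 2 (Fin 2 → ℝ))).trans
    b.measurableEquiv.symm).trans (MeasurableEquiv.addLeft A), ?_, fun w => ?_⟩
  · exact (((volume_preserving_finTwoArrow ℝ).symm.trans
      (EuclideanSpace.volume_preserving_symm_measurableEquiv_toLp (Fin 2)).symm).trans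
      b.measurePreserving_measurableEquiv.symm).trans (measurePreserving_add_left volume A)
  · simp [OrthonormalBasis.measurableEquiv, ← b.sum_repr_symm, hb, add_assoc]

/-- In the orthonormal frame `(uvec A B, inNormal A B c r)` at `A`, with `d = footd A B c`,
`triangleChart d r (t, s)` is the point at height `s` on the segment from `A + t • uvec A B` to the
apex `c`. -/
noncomputable def triangleChart (d r : ℝ) (w : ℝ × ℝ) : ℝ × ℝ :=
  ((1 - w.2 / r) * w.1 + d / r * w.2, w.2)

noncomputable def triangleChartDeriv (d r : ℝ) (w : ℝ × ℝ) : ℝ × ℝ →L[ℝ] ℝ × ℝ :=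
  (((1 - w.2 / r) • ContinuousLinearMap.fst ℝ ℝ ℝ
    + ((d - w.1) / r) • ContinuousLinearMap.snd ℝ ℝ ℝ).prod (ContinuousLinearMap.snd ℝ ℝ ℝ))

theorem hasFDerivAt_triangleChart (d r : ℝ) (w : ℝ × ℝ) :
    HasFDerivAt (triangleChart d r) (triangleChartDeriv d r w) w := by
  have h1 : HasFDerivAt (fun w : ℝ × ℝ => w.1) (ContinuousLinearMap.fst ℝ ℝ ℝ) w := hasFDerivAt_fst
  have h2 : HasFDerivAt (fun w : ℝ × ℝ => w.2) (ContinuousLinearMap.snd ℝ ℝ ℝ) w := hasFDerivAt_snd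
  have := (((h2.mul_const r⁻¹).const_sub 1).mul h1).add (h2.const_mul (d / r))
  refine HasFDerivAt.prodMk (this.congr_fderiv ?_) h2
  ext <;> simp <;> ring

theorem det_triangleChartDeriv (d r : ℝ) (w : ℝ × ℝ) :
    (triangleChartDeriv d r w).det = 1 - w.2 / r := by
  rw [ContinuousLinearMap.det, ← LinearMap.det_toMatrix (Module.Basis.finTwoProd ℝ),
    Matrix.det_fin_two]
  simp [LinearMap.toMatrix_apply, triangleChartDeriv]

theorem injOn_triangleChart (d r : ℝ) :
    InjOn (triangleChart d r) (univ ×ˢ Iio r) := by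
  rintro ⟨t, s⟩ ⟨-, hs⟩ ⟨t', s'⟩ - h
  simp only [triangleChart, Prod.mk.injEq] at h
  obtain ⟨h1, rfl⟩ := h
  have hne : 1 - s / r ≠ 0 := sub_ne_zero.2 (div_ne_one_of_ne (ne_of_lt hs)).symm
  simp only [Prod.mk.injEq, and_true]
  exact mul_left_cancel₀ hne (by linarith)

theorem setIntegral_image_triangleChart {r : ℝ} (d l : ℝ) (hr : 0 < r) (g : ℝ × ℝ → ℝ) :
    ∫ z in triangleChart d r '' (Icc 0 l ×ˢ Icc 0 r), g z
      = ∫ w in Icc 0 l ×ˢ Ico 0 r, (1 - w.2 / r) * g (triangleChart d r w) := by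
  have hmeas : MeasurableSet (Icc 0 l ×ˢ Ico (0 : ℝ) r) := measurableSet_Icc.prod measurableSet_Ico
  -- the top side of the rectangle collapses to the apex `(d, r)`
  have hapex : triangleChart d r '' (Icc 0 l ×ˢ Icc 0 r) \ triangleChart d r '' (Icc 0 l ×ˢ Ico 0 r)
      ⊆ {(d, r)} := by
    rintro _ ⟨⟨⟨t, s⟩, ⟨ht, hs0, hsr⟩, rfl⟩, hnot⟩
    obtain rfl : s = r := hsr.eq_or_lt.resolve_right fun h => hnot ⟨(t, s), ⟨ht, hs0, h⟩, rfl⟩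
    simp [triangleChart, hr.ne']
  have hae : triangleChart d r '' (Icc 0 l ×ˢ Icc 0 r) =ᵐ[volume]
      triangleChart d r '' (Icc 0 l ×ˢ Ico 0 r) := by
    refine ae_eq_set.2 ⟨measure_mono_null hapex (measure_singleton _), ?_⟩
    rw [sdiff_eq_empty.2 (image_mono (prod_mono subset_rfl Ico_subset_Icc_self)), measure_empty]
  rw [setIntegral_congr_set hae, integral_image_eq_integral_abs_det_fderiv_smul volume hmeas
    (fun w _ => (hasFDerivAt_triangleChart d r w).hasFDerivWithinAt)
    ((injOn_triangleChart d r).mono (prod_mono (subset_univ _) fun s hs => hs.2))]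
  refine setIntegral_congr_fun hmeas fun w hw => ?_
  rw [det_triangleChartDeriv, smul_eq_mul, abs_of_pos]
  exact sub_pos.2 ((div_lt_one hr).2 hw.2.2)

theorem integral_cone_profile {r : ℝ} (hr : 0 < r) (C k : ℝ) :
    ∫ s in (0 : ℝ)..r, (1 - s / r) * ((1 - s / r) * C + k / r * s) = r / 3 * C + k * r / 6 := by
  have hpoly : ∀ s : ℝ, (1 - s / r) * ((1 - s / r) * C + k / r * s)
      = C + (k / r - 2 * C / r) * s + (C / r ^ 2 - k / r ^ 2) * s ^ 2 := fun s => by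
    field_simp; ring
  simp only [hpoly]
  have hii {φ : ℝ → ℝ} (hφ : Continuous φ) : IntervalIntegrable φ volume 0 r :=
    hφ.intervalIntegrable 0 r
  rw [intervalIntegral.integral_add (hii (by fun_prop)) (hii (by fun_prop)),
    intervalIntegral.integral_add (hii (by fun_prop)) (hii (by fun_prop)),
    intervalIntegral.integral_const, intervalIntegral.integral_const_mul,
    intervalIntegral.integral_const_mul, integral_id, integral_pow]
  field_simp
  ring

theorem setIntegral_rectangle_cone {l r : ℝ} (hl : 0 ≤ l) (hr : 0 < r) (k : ℝ) {g : ℝ → ℝ}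
    (hg : ContinuousOn g (Icc 0 l)) :
    ∫ w in Icc 0 l ×ˢ Ico 0 r, (1 - w.2 / r) * ((1 - w.2 / r) * g w.1 + k / r * w.2)
      = r / 3 * (∫ t in (0 : ℝ)..l, g t) + k * r / 6 * l := by
  have hint : IntegrableOn (fun w : ℝ × ℝ => (1 - w.2 / r) * ((1 - w.2 / r) * g w.1 + k / r * w.2))
      (Icc 0 l ×ˢ Ico 0 r) := by
    refine ContinuousOn.integrableOn_compact (isCompact_Icc.prod isCompact_Icc) ?_ |>.mono_set
      (prod_mono subset_rfl Ico_subset_Icc_self)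
    have : ContinuousOn (fun w : ℝ × ℝ => g w.1) (Icc 0 l ×ˢ Icc 0 r) :=
      hg.comp continuous_fst.continuousOn fun w hw => (mem_prod.1 hw).1
    have hweight : Continuous fun w : ℝ × ℝ => 1 - w.2 / r := by fun_prop
    exact hweight.continuousOn.mul ((hweight.continuousOn.mul this).add (by fun_prop))
  rw [Measure.volume_eq_prod, setIntegral_prod _ hint]
  simp only [integral_Ico_eq_integral_Ioo, ← integral_Ioc_eq_integral_Ioo,
    ← intervalIntegral.integral_of_le hr.le, integral_cone_profile hr]
  rw [integral_Icc_eq_integral_Ioc, ← intervalIntegral.integral_of_le hl,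
    intervalIntegral.integral_add (hg.intervalIntegrable_of_Icc hl |>.const_mul _)
      intervalIntegrable_const,
    intervalIntegral.integral_const_mul, intervalIntegral.integral_const, smul_eq_mul, sub_zero]
  ring

section Side

variable {A B c : E2} {r : ℝ}

theorem norm_uvec (hAB : A ≠ B) : ‖uvec A B‖ = 1 := by
  rw [uvec, norm_smul, norm_inv, Real.norm_of_nonneg dist_nonneg, ← dist_eq_norm',
    inv_mul_cancel₀ (dist_ne_zero.2 hAB)]

theorem add_dist_smul_uvec (A B : E2) : A + dist A B • uvec A B = B := by
  rcases eq_or_ne A B with rfl | hAB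
  · simp
  · rw [uvec, smul_smul, mul_inv_cancel₀ (dist_ne_zero.2 hAB), one_smul, add_sub_cancel]

/-- The vector `nv` of `triExt`: a unit normal to the side, pointing towards `c`, when `c` lies at
distance `r` from the line `AB`. -/
noncomputable def inNormal (A B c : E2) (r : ℝ) : E2 := r⁻¹ • (c - A - footd A B c • uvec A B)

theorem add_footd_smul_add_smul_inNormal (hr : r ≠ 0) :
    A + footd A B c • uvec A B + r • inNormal A B c r = c := by
  rw [inNormal, smul_smul, mul_inv_cancel₀ hr, one_smul]
  abel

theorem orthonormal_uvec_inNormal (hAB : A ≠ B) (hr : 0 < r)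
    (hfoot : ‖c - A - footd A B c • uvec A B‖ = r) :
    Orthonormal ℝ ![uvec A B, inNormal A B c r] := by
  have hu : ‖uvec A B‖ = 1 := norm_uvec hAB
  have hn : ‖inNormal A B c r‖ = 1 := by
    rw [inNormal, norm_smul, norm_inv, Real.norm_of_nonneg hr.le, hfoot, inv_mul_cancel₀ hr.ne']
  have huu : ⟪uvec A B, uvec A B⟫ = 1 := by rw [real_inner_self_eq_norm_sq, hu, one_pow]
  have hun : ⟪uvec A B, inNormal A B c r⟫ = 0 := by
    rw [inNormal, real_inner_smul_right, inner_sub_right, real_inner_smul_right, huu, footd,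
      real_inner_comm, mul_one, sub_self, mul_zero]
  rw [orthonormal_iff_ite]
  intro i j
  fin_cases i <;> fin_cases j <;> simp [hun, real_inner_comm (uvec A B), hu, hn]

theorem triExt_triangleChart (k : ℝ) (f : E2 → ℝ)
    (hon : Orthonormal ℝ ![uvec A B, inNormal A B c r]) {w : ℝ × ℝ} (hw : w.2 ≠ r) :
    triExt A B c r k f (A + (triangleChart (footd A B c) r w).1 • uvec A B
        + (triangleChart (footd A B c) r w).2 • inNormal A B c r)
      = (1 - w.2 / r) * f (A + w.1 • uvec A B) + k / r * w.2 := by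
  have hon' := orthonormal_iff_ite.1 hon
  have huu : ⟪uvec A B, uvec A B⟫ = 1 := by simpa using hon' 0 0
  have hun : ⟪uvec A B, inNormal A B c r⟫ = 0 := by simpa using hon' 0 1
  have hnu : ⟪inNormal A B c r, uvec A B⟫ = 0 := by simpa using hon' 1 0
  have hnn : ⟪inNormal A B c r, inNormal A B c r⟫ = 1 := by simpa using hon' 1 1
  have h1r : 1 - w.2 / r ≠ 0 := sub_ne_zero.2 (div_ne_one_of_ne hw).symm
  set p := A + (triangleChart (footd A B c) r w).1 • uvec A B
        + (triangleChart (footd A B c) r w).2 • inNormal A B c r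
  have hpA : p - A = ((1 - w.2 / r) * w.1 + footd A B c / r * w.2) • uvec A B
      + w.2 • inNormal A B c r := by
    simp only [p]; rw [add_assoc, add_sub_cancel_left]; rfl
  have hX : ⟪p - A, uvec A B⟫ = (1 - w.2 / r) * w.1 + footd A B c / r * w.2 := by
    rw [hpA, inner_add_left, real_inner_smul_left, real_inner_smul_left, huu, hnu]; ring
  have hY : ⟪p - A, inNormal A B c r⟫ = w.2 := by
    rw [hpA, inner_add_left, real_inner_smul_left, real_inner_smul_left, hun, hnn]; ring
  simp only [triExt, ← inNormal.eq_1, hX, hY, if_neg hw, add_sub_cancel_right,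
    mul_div_cancel_left₀ _ h1r]

theorem add_smul_uvec_mem_segment (hAB : A ≠ B) {t : ℝ} (ht : t ∈ Icc 0 (dist A B)) :
    A + t • uvec A B ∈ segment ℝ A B := by
  have hl : 0 < dist A B := dist_pos.2 hAB
  refine ⟨1 - t / dist A B, t / dist A B, sub_nonneg.2 ((div_le_one hl).2 ht.2),
    div_nonneg ht.1 hl.le, by ring, ?_⟩
  rw [uvec, smul_smul, div_eq_mul_inv]
  module

theorem continuousOn_sideFun (hAB : A ≠ B) {f : E2 → ℝ} (hf : ContinuousOn f (segment ℝ A B)) :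
    ContinuousOn (sideFun A B f) (Icc 0 (dist A B)) :=
  hf.comp (by fun_prop) fun _ ht => add_smul_uvec_mem_segment hAB ht

theorem integral_abs_triExt (hr : 0 < r) (hAB : A ≠ B)
    (hfoot : ‖c - A - footd A B c • uvec A B‖ = r) {k : ℝ} (hk : 0 ≤ k) {f : E2 → ℝ}
    (hf : ContinuousOn f (segment ℝ A B)) (hf0 : ∀ p ∈ segment ℝ A B, 0 ≤ f p) :
    ∫ p in convexHull ℝ {A, B, c}, |triExt A B c r k f p|
      = r / 3 * (∫ t in (0 : ℝ)..dist A B, sideFun A B f t) + k * r / 6 * dist A B := by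
  have hon := orthonormal_uvec_inNormal hAB hr hfoot
  obtain ⟨e, he, he_apply⟩ := exists_measurePreserving_affine_frame (by simp) hon A
  set chart := triangleChart (footd A B c) r
  have hT : convexHull ℝ {A, B, c} = e '' (chart '' (Icc 0 (dist A B) ×ˢ Icc 0 r)) := by
    have hvertices : ({A, B, c} : Set E2) = {A, A + dist A B • uvec A B,
        A + footd A B c • uvec A B + r • inNormal A B c r} := by
      rw [add_dist_smul_uvec, add_footd_smul_add_smul_inNormal hr.ne']
    rw [hvertices, image_image, convexHull_triple_eq_image _ _ _ (dist_pos.2 hAB) hr]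
    refine image_congr fun w _ => ?_
    rw [he_apply]
    simp only [chart, triangleChart]
    match_scalars <;> field_simp
    ring
  have hmeas : MeasurableSet (Icc 0 (dist A B) ×ˢ Ico (0 : ℝ) r) :=
    measurableSet_Icc.prod measurableSet_Ico
  calc ∫ p in convexHull ℝ {A, B, c}, |triExt A B c r k f p|
      = ∫ w in chart '' (Icc 0 (dist A B) ×ˢ Icc 0 r), |triExt A B c r k f (e w)| := by
        rw [hT, he.setIntegral_image_emb e.measurableEmbedding]
    _ = ∫ w in Icc 0 (dist A B) ×ˢ Ico 0 r, (1 - w.2 / r) * |triExt A B c r k f (e (chart w))| :=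
        setIntegral_image_triangleChart _ _ hr _
    _ = ∫ w in Icc 0 (dist A B) ×ˢ Ico 0 r,
          (1 - w.2 / r) * ((1 - w.2 / r) * sideFun A B f w.1 + k / r * w.2) := by
        refine setIntegral_congr_fun hmeas fun w ⟨ht, hs0, hsr⟩ => ?_
        have hweight : 0 ≤ 1 - w.2 / r := sub_nonneg.2 ((div_le_one hr).2 hsr.le)
        rw [he_apply, triExt_triangleChart k f hon hsr.ne, abs_of_nonneg]
        · rfl
        · exact add_nonneg (mul_nonneg hweight (hf0 _ (add_smul_uvec_mem_segment hAB ht)))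
            (by positivity)
    _ = r / 3 * (∫ t in (0 : ℝ)..dist A B, sideFun A B f t) + k * r / 6 * dist A B :=
        setIntegral_rectangle_cone dist_nonneg hr k (continuousOn_sideFun hAB hf)

end Side

theorem polygon_L1_extension_bound_general (n : ℕ) [NeZero n] (v : Fin n → E2)
    (c : E2) (r : ℝ) (hr : 0 < r)
    (hside : ∀ i : Fin n, v i ≠ v (i + 1))
    (hfoot : ∀ i : Fin n, ‖c - v i - footd (v i) (v (i + 1)) c • uvec (v i) (v (i + 1))‖ = r)
    (f : E2 → ℝ)
    (hf_cont : ContinuousOn f (⋃ i, segment ℝ (v i) (v (i + 1))))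
    (hf_nonneg : ∀ p ∈ ⋃ i, segment ℝ (v i) (v (i + 1)), 0 ≤ f p)
    (k : ℝ) (hk0 : 0 ≤ k)
    (hk : k ≤ (∑ i : Fin n, ∫ t in (0 : ℝ)..dist (v i) (v (i + 1)), sideFun (v i) (v (i + 1)) f t)
            / ∑ i : Fin n, dist (v i) (v (i + 1))) :
    ∑ i : Fin n, ∫ p in convexHull ℝ {v i, v (i + 1), c}, |triExt (v i) (v (i + 1)) c r k f p|
      ≤ r / 2 * ∑ i : Fin n, ∫ t in (0 : ℝ)..dist (v i) (v (i + 1)), sideFun (v i) (v (i + 1)) f t := by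
  have hseg (i : Fin n) : segment ℝ (v i) (v (i + 1)) ⊆ ⋃ j, segment ℝ (v j) (v (j + 1)) :=
    subset_iUnion (fun j => segment ℝ (v j) (v (j + 1))) i
  have hperimeter : 0 < ∑ i : Fin n, dist (v i) (v (i + 1)) :=
    Finset.sum_pos (fun i _ => dist_pos.2 (hside i)) Finset.univ_nonempty
  have hk_perimeter := (le_div_iff₀ hperimeter).1 hk
  rw [Finset.sum_congr rfl fun i _ => integral_abs_triExt hr (hside i) (hfoot i) hk0
    (hf_cont.mono (hseg i)) fun p hp => hf_nonneg p (hseg i hp), Finset.sum_add_distrib,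
    ← Finset.mul_sum, ← Finset.mul_sum]
  linarith [mul_le_mul_of_nonneg_left hk_perimeter hr.le]

/-- Let `P` be a convex compact polygon with vertices `v 0, …, v (n-1)`
and inscribed circle of center `c` and radius `r > 0` tangent to every side.  If
`f : ∂P → ℝ` is continuous, nonnegative and `H¹` on each side, and
`0 ≤ k ≤ (∫_{∂P} f dμ)/|∂P|`, then `∫_P |F| dxdy ≤ (r/2)·∫_{∂P} f dμ`, where the
integrals are computed sidewise resp. trianglewise. -/
theorem polygon_L1_extension_bound (n : ℕ) [NeZero n] (hn : 3 ≤ n) (v : Fin n → E2)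
    (c : E2) (r : ℝ) (hr : 0 < r)
    (hside : ∀ i : Fin n, v i ≠ v (i + 1))
    (hball : Metric.closedBall c r ⊆ convexHull ℝ (Set.range v))
    (hbdry : frontier (convexHull ℝ (Set.range v)) = ⋃ i, segment ℝ (v i) (v (i + 1)))
    (hfoot : ∀ i : Fin n, ‖c - v i - footd (v i) (v (i + 1)) c • uvec (v i) (v (i + 1))‖ = r)
    (htang : ∀ i : Fin n, ∃ p ∈ segment ℝ (v i) (v (i + 1)), dist c p = r)
    (f : E2 → ℝ)
    (hf_cont : ContinuousOn f (⋃ i, segment ℝ (v i) (v (i + 1))))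
    (hf_nonneg : ∀ p ∈ ⋃ i, segment ℝ (v i) (v (i + 1)), 0 ≤ f p)
    (D : Fin n → ℝ → ℝ)
    (hH1 : ∀ i : Fin n, ∀ t ∈ Set.Icc (0 : ℝ) (dist (v i) (v (i + 1))),
      sideFun (v i) (v (i + 1)) f t
        = sideFun (v i) (v (i + 1)) f 0 + ∫ s in (0 : ℝ)..t, D i s)
    (hD2 : ∀ i : Fin n,
      MemLp (D i) 2 (volume.restrict (Set.Ioc (0 : ℝ) (dist (v i) (v (i + 1))))))
    (k : ℝ) (hk0 : 0 ≤ k)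
    (hk : k ≤ (∑ i : Fin n, ∫ t in (0 : ℝ)..dist (v i) (v (i + 1)), sideFun (v i) (v (i + 1)) f t)
            / ∑ i : Fin n, dist (v i) (v (i + 1))) :
    ∑ i : Fin n, ∫ p in convexHull ℝ {v i, v (i + 1), c}, |triExt (v i) (v (i + 1)) c r k f p|
      ≤ r / 2 * ∑ i : Fin n, ∫ t in (0 : ℝ)..dist (v i) (v (i + 1)), sideFun (v i) (v (i + 1)) f t :=
  polygon_L1_extension_bound_general n v c r hr hside hfoot f hf_cont hf_nonneg k hk0 hk
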